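/- For every ξ with 0 < ξ < 1/6, a real number q satisfies V(q) = ξ if and only if q equals one of the three numbers q_min(ξ), q_max(ξ), c(ξ); in particular the equation V(q) = ξ has exactly three distinct real solutions. -/

import Mathlib

open Real

/-- The cubic potential `V(q) = q²/2 − q³/3`. -/
noncomputable def V (q : ℝ) : ℝ := q ^ 2 / 2 - q ^ 3 / 3

/-- `z(ξ) = (1/3)·arccos(1 − 12ξ)`. -/
noncomputable def zOf (ξ : ℝ) : ℝ := Real.arccos (1 - 12 * ξ) / 3

/-- Smallest root `q_min(ξ) = 1/2 − sin(z + π/6)`. -/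
noncomputable def qmin (ξ : ℝ) : ℝ := 1 / 2 - Real.sin (zOf ξ + π / 6)

/-- Middle root `q_max(ξ) = 1/2 − sin(π/6 − z)`. -/
noncomputable def qmax (ξ : ℝ) : ℝ := 1 / 2 - Real.sin (π / 6 - zOf ξ)

/-- Largest root `c(ξ) = cos z + 1/2`. -/
noncomputable def cRoot (ξ : ℝ) : ℝ := Real.cos (zOf ξ) + 1 / 2

/-!
Substituting `q = x + 1/2` turns `V q = ξ` into `4x³ − 3x = 1 − 12ξ`, the triple-angle
equation `cos 3θ = cos 3z` for `x = cos θ`. Its three solutions are `cos z` and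
`cos (z ± 2π/3)`, which are the three given roots shifted by `1/2`. For `0 < z < π/3` the
angles `z < 2π/3 − z < z + 2π/3` lie in `[0, π]`, where `cos` is strictly decreasing, so the
roots are distinct.
-/

theorem four_mul_cube_sub_three_mul_sub_cos_three_mul (x θ : ℝ) :
    4 * x ^ 3 - 3 * x - cos (3 * θ) =
      4 * (x - cos θ) * (x - cos (θ + 2 * π / 3)) * (x - cos (θ - 2 * π / 3)) := by
  have hplus : cos (θ + 2 * π / 3) = -cos θ / 2 - √3 / 2 * sin θ := by
    rw [show θ + 2 * π / 3 = θ + π / 6 + π / 2 by ring, cos_add_pi_div_two, sin_add,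
      sin_pi_div_six, cos_pi_div_six]
    ring
  have hminus : cos (θ - 2 * π / 3) = -cos θ / 2 + √3 / 2 * sin θ := by
    rw [show θ - 2 * π / 3 = -(π / 6 - θ + π / 2) by ring, cos_neg, cos_add_pi_div_two,
      sin_sub, sin_pi_div_six, cos_pi_div_six]
    ring
  have hsqrt : √3 ^ 2 = 3 := sq_sqrt (by norm_num)
  rw [hplus, hminus, cos_three_mul]
  linear_combination (x - cos θ) * (sin θ ^ 2 * hsqrt + 3 * sin_sq_add_cos_sq θ)

theorem V_sub_eq_mul (q θ : ℝ) :
    V q - (1 - cos (3 * θ)) / 12 =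
      -(1 / 3) * (q - (cos (θ + 2 * π / 3) + 1 / 2)) * (q - (cos (θ - 2 * π / 3) + 1 / 2)) *
        (q - (cos θ + 1 / 2)) := by
  rw [V]
  linear_combination (-1 / 12) * four_mul_cube_sub_three_mul_sub_cos_three_mul (q - 1 / 2) θ

theorem V_eq_iff (q θ : ℝ) :
    V q = (1 - cos (3 * θ)) / 12 ↔
      q = cos (θ + 2 * π / 3) + 1 / 2 ∨ q = cos (θ - 2 * π / 3) + 1 / 2 ∨ q = cos θ + 1 / 2 := by
  rw [← sub_eq_zero, V_sub_eq_mul]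
  simp only [mul_eq_zero, sub_eq_zero, neg_eq_zero, one_div, inv_eq_zero,
    OfNat.ofNat_ne_zero, false_or, or_assoc]

theorem cos_add_two_pi_div_three_lt_cos_sub_two_pi_div_three {θ : ℝ} (h₀ : 0 < θ)
    (h₁ : θ < π / 3) : cos (θ + 2 * π / 3) < cos (θ - 2 * π / 3) := by
  rw [← cos_neg (θ - _)]
  exact cos_lt_cos_of_nonneg_of_le_pi (by linarith) (by linarith) (by linarith)

theorem cos_sub_two_pi_div_three_lt_cos {θ : ℝ} (h₀ : 0 < θ) (h₁ : θ < π / 3) :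
    cos (θ - 2 * π / 3) < cos θ := by
  rw [← cos_neg (θ - _)]
  exact cos_lt_cos_of_nonneg_of_le_pi h₀.le (by linarith) (by linarith)

theorem qmin_eq (ξ : ℝ) : qmin ξ = cos (zOf ξ + 2 * π / 3) + 1 / 2 := by
  rw [qmin, show zOf ξ + 2 * π / 3 = zOf ξ + π / 6 + π / 2 by ring, cos_add_pi_div_two]
  ring

theorem qmax_eq (ξ : ℝ) : qmax ξ = cos (zOf ξ - 2 * π / 3) + 1 / 2 := by
  rw [qmax, show zOf ξ - 2 * π / 3 = -(π / 6 - zOf ξ + π / 2) by ring, cos_neg,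
    cos_add_pi_div_two]
  ring

theorem cos_three_mul_zOf {ξ : ℝ} (h₀ : 0 ≤ ξ) (h₁ : ξ ≤ 1 / 6) :
    cos (3 * zOf ξ) = 1 - 12 * ξ := by
  rw [zOf, mul_div_cancel₀ _ three_ne_zero, cos_arccos (by linarith) (by linarith)]

theorem zOf_mem_Ioo {ξ : ℝ} (h₀ : 0 < ξ) (h₁ : ξ < 1 / 6) : zOf ξ ∈ Set.Ioo 0 (π / 3) := by
  have hpos : 0 < arccos (1 - 12 * ξ) := arccos_pos.2 (by linarith)
  have hlt : arccos (1 - 12 * ξ) < π := arccos_lt_pi.2 (by linarith)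
  constructor <;> rw [zOf] <;> linarith

/-- For `0 < ξ < 1/6`, `V(q) = ξ` holds iff `q` is one of the three trigonometric
roots; in particular these three roots are pairwise distinct, so the equation has
exactly three real solutions. -/
theorem cubic_solutions (ξ : ℝ) (h0 : 0 < ξ) (h1 : ξ < 1 / 6) :
    (∀ q : ℝ, V q = ξ ↔ (q = qmin ξ ∨ q = qmax ξ ∨ q = cRoot ξ)) ∧
    qmin ξ ≠ qmax ξ ∧ qmax ξ ≠ cRoot ξ ∧ qmin ξ ≠ cRoot ξ := by
  obtain ⟨hz₀, hz₁⟩ := zOf_mem_Ioo h0 h1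
  have hξ : ξ = (1 - cos (3 * zOf ξ)) / 12 := by
    rw [cos_three_mul_zOf h0.le h1.le]
    ring
  have hmin_lt_max : qmin ξ < qmax ξ := by
    rw [qmin_eq, qmax_eq]
    linarith [cos_add_two_pi_div_three_lt_cos_sub_two_pi_div_three hz₀ hz₁]
  have hmax_lt_c : qmax ξ < cRoot ξ := by
    rw [qmax_eq, cRoot]
    linarith [cos_sub_two_pi_div_three_lt_cos hz₀ hz₁]
  refine ⟨fun q => ?_, hmin_lt_max.ne, hmax_lt_c.ne, (hmin_lt_max.trans hmax_lt_c).ne⟩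
  rw [qmin_eq, qmax_eq, cRoot]
  nth_rewrite 1 [hξ]
  exact V_eq_iff q (zOf ξ)
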